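/- Base SL-FL has determined heaplets: for every base SL-FL formula α, store s, and heaplet g, there is at most one subheaplet h of g such that (s, h) ⊨ α. -/
import Mathlib


/-!
# Base SL-FL (determined-heaplet separation logic)

Locations `Loc` with a distinguished `nil`, field names `F`, variables `Var`.
A heaplet is a domain `dom ⊆ Loc \ {nil}` together with, for each field, a function
defined on the domain (extended by `nil` outside the domain, so that heaplets with the
same domain and the same field values on the domain are equal).
-/

namespace SLFL

open scoped Classical

/-- A heaplet: a domain of locations (not containing `nil`) together with a value for
each field at each location of the domain.  Outside the domain the maps are required to
take the junk value `nil`, so that heaplets are determined by their domain and their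
field values on the domain. -/
structure Heaplet (Loc F : Type) (nil : Loc) where
  dom : Set Loc
  map : F → Loc → Loc
  nil_not_mem : nil ∉ dom
  map_outside : ∀ f l, l ∉ dom → map f l = nil

variable {Loc F Var : Type} {nil : Loc}

/-- The restriction `h↾S`: the heaplet with domain `S ∩ dom h` and fields restricted
accordingly. -/
noncomputable def Heaplet.restrict (h : Heaplet Loc F nil) (S : Set Loc) :
    Heaplet Loc F nil where
  dom := S ∩ h.dom
  map := fun f l => if l ∈ S ∩ h.dom then h.map f l else nil
  nil_not_mem := fun hc => h.nil_not_mem hc.2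
  map_outside := fun f l hl => by simp [hl]

/-- `Agrees h' h S`: the heaplet `h'` agrees with `h` on the set `S`. -/
def Agrees (h' h : Heaplet Loc F nil) (S : Set Loc) : Prop :=
  S ⊆ h.dom ∧ S ⊆ h'.dom ∧ ∀ f : F, ∀ u ∈ S, h'.map f u = h.map f u

/-- `Subheaplet h' h`: `h'` is a subheaplet of `h`. -/
def Subheaplet (h' h : Heaplet Loc F nil) : Prop :=
  h'.dom ⊆ h.dom ∧ Agrees h h' h'.dom

/-- Formulas of the base SL-FL logic: heap-independent formulas, points-to atoms,
guarded existentials `∃y.(x ↦_f y : α)`, conditionals, conjunction, overlapping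
conjunction `∧∧`, disjunction, and separating conjunction `⋆`. -/
inductive Fml (Var F Loc : Type) : Type _ where
  | pure (δ : (Var → Loc) → Prop)
  | pointsTo (x : Var) (f : F) (y : Var)
  | exGuard (y x : Var) (f : F) (α : Fml Var F Loc)
  | ite (γ α β : Fml Var F Loc)
  | and (α β : Fml Var F Loc)
  | oand (α β : Fml Var F Loc)
  | or (α β : Fml Var F Loc)
  | star (α β : Fml Var F Loc)

/-- Union of two partial sets of locations (`none` plays the role of `⊥`). -/
def union2 : Option (Set Loc) → Option (Set Loc) → Option (Set Loc)
  | some a, some b => some (a ∪ b)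
  | _, _ => none

mutual
/-- The partial support `Supp(α, s, h)`; `none` is `⊥`. -/
noncomputable def Supp : Fml Var F Loc → (Var → Loc) → Heaplet Loc F nil → Option (Set Loc)
  | .pure _, _, _ => some (∅ : Set Loc)
  | .pointsTo x _ _, s, h => if s x ∈ h.dom then some {s x} else none
  | .exGuard y x f α, s, h =>
      if s x ∈ h.dom then
        match Supp α (Function.update s y (h.map f (s x))) h with
        | some S => some ({s x} ∪ S)
        | none => none
      else none
  | .ite γ α β, s, h =>
      match Supp γ s h with
      | none => none
      | some Sγ =>
        if Sat γ s (h.restrict Sγ) then (Supp α s h).map fun Sα => Sγ ∪ Sα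
        else (Supp β s h).map fun Sβ => Sγ ∪ Sβ
  | .and α β, s, h => union2 (Supp α s h) (Supp β s h)
  | .oand α β, s, h => union2 (Supp α s h) (Supp β s h)
  | .or α β, s, h => union2 (Supp α s h) (Supp β s h)
  | .star α β, s, h => union2 (Supp α s h) (Supp β s h)

/-- Satisfaction `(s, h) ⊨ α`. -/
noncomputable def Sat : Fml Var F Loc → (Var → Loc) → Heaplet Loc F nil → Prop
  | .pure δ, s, h => δ s ∧ h.dom = ∅
  | .pointsTo x f y, s, h => h.dom = {s x} ∧ h.map f (s x) = s y
  | .exGuard y x f α, s, h =>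
      s x ∈ h.dom ∧
        ∃ S, Supp α (Function.update s y (h.map f (s x))) h = some S ∧
          h.dom = {s x} ∪ S ∧
          Sat α (Function.update s y (h.map f (s x))) (h.restrict S)
  | .ite γ α β, s, h =>
      ∃ Sγ, Supp γ s h = some Sγ ∧
        ((Sat γ s (h.restrict Sγ) ∧
            ∃ Sα, Supp α s h = some Sα ∧ h.dom = Sγ ∪ Sα ∧ Sat α s (h.restrict Sα)) ∨
         (¬ Sat γ s (h.restrict Sγ) ∧
            ∃ Sβ, Supp β s h = some Sβ ∧ h.dom = Sγ ∪ Sβ ∧ Sat β s (h.restrict Sβ)))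
  | .and α β, s, h => Sat α s h ∧ Sat β s h
  | .oand α β, s, h =>
      ∃ Sα Sβ, Supp α s h = some Sα ∧ Supp β s h = some Sβ ∧
        h.dom = Sα ∪ Sβ ∧ Sat α s (h.restrict Sα) ∧ Sat β s (h.restrict Sβ)
  | .or α β, s, h =>
      ∃ Sα Sβ, Supp α s h = some Sα ∧ Supp β s h = some Sβ ∧
        h.dom = Sα ∪ Sβ ∧ (Sat α s (h.restrict Sα) ∨ Sat β s (h.restrict Sβ))
  | .star α β, s, h =>
      ∃ h₁ h₂ : Heaplet Loc F nil, Subheaplet h₁ h ∧ Subheaplet h₂ h ∧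
        Disjoint h₁.dom h₂.dom ∧ h.dom = h₁.dom ∪ h₂.dom ∧ Sat α s h₁ ∧ Sat β s h₂
end


section Aux
variable {Loc F Var : Type} {nil : Loc}

theorem Heaplet.ext' {h h' : Heaplet Loc F nil} (hd : h.dom = h'.dom)
    (hm : ∀ f l, l ∈ h.dom → h.map f l = h'.map f l) : h = h' := by
  obtain ⟨d, m, n, o⟩ := h
  obtain ⟨d', m', n', o'⟩ := h'
  simp only at hd hm
  subst hd
  simp only [Heaplet.mk.injEq, true_and]
  funext f l
  by_cases hl : l ∈ d
  · exact hm f l hl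
  · rw [o f l hl, o' f l hl]

lemma restrict_eq_of_subheaplet {h' h : Heaplet Loc F nil} (hs : Subheaplet h' h)
    {S : Set Loc} (hS : S ⊆ h'.dom) : h.restrict S = h'.restrict S := by
  obtain ⟨hdom, _, _, hmap⟩ := hs
  apply Heaplet.ext'
  · show S ∩ h.dom = S ∩ h'.dom
    rw [Set.inter_eq_left.mpr (hS.trans hdom), Set.inter_eq_left.mpr hS]
  · rintro f l ⟨hlS, hld⟩
    have h1 : l ∈ h'.dom := hS hlS
    simp only [Heaplet.restrict, Set.mem_inter_iff]
    rw [if_pos ⟨hlS, hld⟩, if_pos ⟨hlS, h1⟩]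
    exact hmap f l h1

lemma restrict_dom_of_subheaplet {h g : Heaplet Loc F nil} (hs : Subheaplet h g) :
    g.restrict h.dom = h := by
  obtain ⟨hdom, _, _, hmap⟩ := hs
  apply Heaplet.ext'
  · show h.dom ∩ g.dom = h.dom
    exact Set.inter_eq_left.mpr hdom
  · rintro f l ⟨hl, hlg⟩
    simp only [Heaplet.restrict, Set.mem_inter_iff]
    rw [if_pos ⟨hl, hlg⟩]
    exact hmap f l hl

@[simp] lemma union2_some_some (a b : Set Loc) :
    union2 (some a) (some b) = some (a ∪ b) := rfl

@[simp] lemma union2_none_left (o : Option (Set Loc)) : union2 none o = none := rfl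

@[simp] lemma union2_none_right (o : Option (Set Loc)) : union2 o none = none := by
  cases o <;> rfl

lemma union2_eq_some {o₁ o₂ : Option (Set Loc)} {S : Set Loc}
    (h : union2 o₁ o₂ = some S) :
    ∃ S₁ S₂, o₁ = some S₁ ∧ o₂ = some S₂ ∧ S = S₁ ∪ S₂ := by
  cases o₁ with
  | none => simp at h
  | some S₁ =>
    cases o₂ with
    | none => simp at h
    | some S₂ =>
      refine ⟨S₁, S₂, rfl, rfl, ?_⟩
      simpa [eq_comm] using h

lemma supp_subset (α : Fml Var F Loc) :
    ∀ (s : Var → Loc) (h : Heaplet Loc F nil) (S : Set Loc),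
      Supp (nil := nil) α s h = some S → S ⊆ h.dom := by
  induction α with
  | pure δ =>
    intro s h S hS
    simp only [Supp, Option.some.injEq] at hS
    subst hS; exact Set.empty_subset _
  | pointsTo x f y =>
    intro s h S hS
    simp only [Supp] at hS
    split at hS
    · injection hS with hS; subst hS
      simpa using ‹s x ∈ h.dom›
    · exact absurd hS (by simp)
  | exGuard y x f α ih =>
    intro s h S hS
    simp only [Supp] at hS
    split at hS
    · rename_i hx
      rcases hα : Supp (nil := nil) α (Function.update s y (h.map f (s x))) h with _ | S'
      · rw [hα] at hS; exact absurd hS (by simp)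
      · rw [hα] at hS
        injection hS with hS; subst hS
        exact Set.union_subset (by simpa using hx) (ih _ _ _ hα)
    · exact absurd hS (by simp)
  | ite γ α β ihγ ihα ihβ =>
    intro s h S hS
    simp only [Supp] at hS
    split at hS
    · exact absurd hS (by simp)
    · rename_i Sγ hγ
      split at hS
      · obtain ⟨Sα, hα, hSα⟩ := Option.map_eq_some_iff.mp hS
        subst hSα
        exact Set.union_subset (ihγ _ _ _ hγ) (ihα _ _ _ hα)
      · obtain ⟨Sβ, hβ, hSβ⟩ := Option.map_eq_some_iff.mp hS
        subst hSβ
        exact Set.union_subset (ihγ _ _ _ hγ) (ihβ _ _ _ hβ)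
  | and α β ihα ihβ =>
    intro s h S hS
    simp only [Supp] at hS
    obtain ⟨S₁, S₂, h₁, h₂, rfl⟩ := union2_eq_some hS
    exact Set.union_subset (ihα _ _ _ h₁) (ihβ _ _ _ h₂)
  | oand α β ihα ihβ =>
    intro s h S hS
    simp only [Supp] at hS
    obtain ⟨S₁, S₂, h₁, h₂, rfl⟩ := union2_eq_some hS
    exact Set.union_subset (ihα _ _ _ h₁) (ihβ _ _ _ h₂)
  | or α β ihα ihβ =>
    intro s h S hS
    simp only [Supp] at hS
    obtain ⟨S₁, S₂, h₁, h₂, rfl⟩ := union2_eq_some hS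
    exact Set.union_subset (ihα _ _ _ h₁) (ihβ _ _ _ h₂)
  | star α β ihα ihβ =>
    intro s h S hS
    simp only [Supp] at hS
    obtain ⟨S₁, S₂, h₁, h₂, rfl⟩ := union2_eq_some hS
    exact Set.union_subset (ihα _ _ _ h₁) (ihβ _ _ _ h₂)

lemma supp_mono (α : Fml Var F Loc) :
    ∀ (s : Var → Loc) {h' h : Heaplet Loc F nil}, Subheaplet h' h →
      ∀ S, Supp (nil := nil) α s h' = some S → Supp (nil := nil) α s h = some S := by
  induction α with
  | pure δ => intro s h' h hs S hS; simpa [Supp] using hS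
  | pointsTo x f y =>
    intro s h' h hs S hS
    simp only [Supp] at hS ⊢
    split at hS
    · rename_i hx
      rw [if_pos (hs.1 hx)]; exact hS
    · exact absurd hS (by simp)
  | exGuard y x f α ih =>
    intro s h' h hs S hS
    simp only [Supp] at hS ⊢
    split at hS
    · rename_i hx
      have hmap : h.map f (s x) = h'.map f (s x) := hs.2.2.2 f (s x) hx
      rcases hα : Supp (nil := nil) α (Function.update s y (h'.map f (s x))) h' with _ | S'
      · rw [hα] at hS; exact absurd hS (by simp)
      · rw [hα] at hS
        simp only [if_pos (hs.1 hx), hmap, ih _ hs _ hα]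
        exact hS
    · exact absurd hS (by simp)
  | ite γ α β ihγ ihα ihβ =>
    intro s h' h hs S hS
    simp only [Supp] at hS ⊢
    split at hS
    · exact absurd hS (by simp)
    · rename_i Sγ hγ
      have hres : h.restrict Sγ = h'.restrict Sγ :=
        restrict_eq_of_subheaplet hs (supp_subset γ _ _ _ hγ)
      simp only [ihγ _ hs _ hγ, hres]
      split at hS
      · rename_i hsat
        rw [if_pos hsat]
        obtain ⟨Sα, hα, hSα⟩ := Option.map_eq_some_iff.mp hS
        rw [ihα _ hs _ hα]
        simpa using hSα
      · rename_i hsat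
        rw [if_neg hsat]
        obtain ⟨Sβ, hβ, hSβ⟩ := Option.map_eq_some_iff.mp hS
        rw [ihβ _ hs _ hβ]
        simpa using hSβ
  | and α β ihα ihβ =>
    intro s h' h hs S hS
    simp only [Supp] at hS ⊢
    obtain ⟨S₁, S₂, h₁, h₂, rfl⟩ := union2_eq_some hS
    rw [ihα _ hs _ h₁, ihβ _ hs _ h₂]; rfl
  | oand α β ihα ihβ =>
    intro s h' h hs S hS
    simp only [Supp] at hS ⊢
    obtain ⟨S₁, S₂, h₁, h₂, rfl⟩ := union2_eq_some hS
    rw [ihα _ hs _ h₁, ihβ _ hs _ h₂]; rfl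
  | or α β ihα ihβ =>
    intro s h' h hs S hS
    simp only [Supp] at hS ⊢
    obtain ⟨S₁, S₂, h₁, h₂, rfl⟩ := union2_eq_some hS
    rw [ihα _ hs _ h₁, ihβ _ hs _ h₂]; rfl
  | star α β ihα ihβ =>
    intro s h' h hs S hS
    simp only [Supp] at hS ⊢
    obtain ⟨S₁, S₂, h₁, h₂, rfl⟩ := union2_eq_some hS
    rw [ihα _ hs _ h₁, ihβ _ hs _ h₂]; rfl

lemma sat_supp (α : Fml Var F Loc) :
    ∀ (s : Var → Loc) (h : Heaplet Loc F nil),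
      Sat (nil := nil) α s h → Supp (nil := nil) α s h = some h.dom := by
  induction α with
  | pure δ =>
    intro s h hsat
    obtain ⟨_, hdom⟩ := hsat
    simp [Supp, hdom]
  | pointsTo x f y =>
    intro s h hsat
    obtain ⟨hdom, _⟩ := hsat
    have hx : s x ∈ h.dom := by rw [hdom]; rfl
    simp [Supp, hx, hdom]
  | exGuard y x f α ih =>
    intro s h hsat
    obtain ⟨hx, S, hSupp, hdom, _⟩ := hsat
    simp only [Supp, if_pos hx, hSupp, hdom]
    rw [if_pos (show s x ∈ ({s x} : Set Loc) ∪ S from Set.mem_union_left S rfl)]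
  | ite γ α β ihγ ihα ihβ =>
    intro s h hsat
    obtain ⟨Sγ, hγ, hbr⟩ := hsat
    simp only [Supp, hγ]
    rcases hbr with ⟨hsat, Sα, hα, hdom, _⟩ | ⟨hnsat, Sβ, hβ, hdom, _⟩
    · rw [if_pos hsat, hα, hdom]; rfl
    · rw [if_neg hnsat, hβ, hdom]; rfl
  | and α β ihα ihβ =>
    intro s h hsat
    obtain ⟨h1, h2⟩ := hsat
    simp only [Supp, ihα _ _ h1, ihβ _ _ h2, union2_some_some, Set.union_self]
  | oand α β ihα ihβ =>
    intro s h hsat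
    obtain ⟨Sα, Sβ, hα, hβ, hdom, _⟩ := hsat
    simp only [Supp, hα, hβ, union2_some_some, hdom]
  | or α β ihα ihβ =>
    intro s h hsat
    obtain ⟨Sα, Sβ, hα, hβ, hdom, _⟩ := hsat
    simp only [Supp, hα, hβ, union2_some_some, hdom]
  | star α β ihα ihβ =>
    intro s h hsat
    obtain ⟨h₁, h₂, sub₁, sub₂, _, hdom, satα, satβ⟩ := hsat
    have hα := supp_mono α s sub₁ _ (ihα _ _ satα)
    have hβ := supp_mono β s sub₂ _ (ihβ _ _ satβ)
    simp only [Supp, hα, hβ, union2_some_some, hdom]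

end Aux

end SLFL

open SLFL in
/-- Base SL-FL has determined heaplets: for every base SL-FL formula
`α`, store `s`, and heaplet `g`, there is at most one subheaplet `h` of `g` such that
`(s, h) ⊨ α`. -/
theorem determined_heaplets {Loc F Var : Type} {nil : Loc}
    (α : Fml Var F Loc) (s : Var → Loc) (g h₁ h₂ : Heaplet Loc F nil)
    (hsub₁ : Subheaplet h₁ g) (hsub₂ : Subheaplet h₂ g)
    (hsat₁ : Sat (nil := nil) α s h₁) (hsat₂ : Sat (nil := nil) α s h₂) :
    h₁ = h₂ := by
  have e1 := supp_mono (nil := nil) α s hsub₁ _ (sat_supp (nil := nil) α s h₁ hsat₁)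
  have e2 := supp_mono (nil := nil) α s hsub₂ _ (sat_supp (nil := nil) α s h₂ hsat₂)
  have hdom : h₁.dom = h₂.dom := by
    rw [e1] at e2; injection e2
  calc h₁ = g.restrict h₁.dom := (restrict_dom_of_subheaplet hsub₁).symm
    _ = g.restrict h₂.dom := by rw [hdom]
    _ = h₂ := restrict_dom_of_subheaplet hsub₂
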